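/- Let N ≥ 2 and let f : ℝ → ℝ be concave on the interval [0,1]. Define u(t) = f(t) + (N−1)·f((1−t)/(N−1)). Then u is non-increasing on the interval [1/N, 1]: for all s, t with 1/N ≤ s ≤ t ≤ 1 one has u(t) ≤ u(s). (Paper's Theorem 2, monotonicity of the upper bound.) -/

import Mathlib

/-!
Write `a = (1 - t)/(N - 1)` and `b = (1 - s)/(N - 1)`, so that `u(t) = f t + (N - 1) f a` and
`u(s) = f s + (N - 1) f b`. Then `a ≤ b ≤ s ≤ t`, and both pairs have the same weighted sum
`t + (N - 1) a = s + (N - 1) b = 1`. Thus `(s, b)` is obtained from `(t, a)` by moving mass towards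
the inside of `[a, t]`, which cannot decrease a concave function: bound `f s` and `f b` below by
the chord of `f` over `[a, t]`.
-/

theorem ConcaveOn.chord_le_of_mem_Icc {S : Set ℝ} {f : ℝ → ℝ} (hf : ConcaveOn ℝ S f)
    {a b z : ℝ} (ha : a ∈ S) (hb : b ∈ S) (hz : z ∈ Set.Icc a b) :
    (b - z) * f a + (z - a) * f b ≤ (b - a) * f z := by
  obtain ⟨haz, hzb⟩ := hz
  rcases (haz.trans hzb).eq_or_lt with rfl | hlt
  · obtain rfl : z = a := le_antisymm hzb haz
    simp
  have hab : 0 < b - a := sub_pos.2 hlt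
  have hcomb : (b - z) / (b - a) * a + (z - a) / (b - a) * b = z := by field_simp; ring
  have hchord : (b - z) / (b - a) * f a + (z - a) / (b - a) * f b ≤ f z := by
    have hw : (b - z) / (b - a) + (z - a) / (b - a) = 1 := by field_simp; ring
    simpa only [smul_eq_mul, hcomb] using
      hf.2 ha hb (div_nonneg (by linarith) hab.le) (div_nonneg (by linarith) hab.le) hw
  calc (b - z) * f a + (z - a) * f b
      = (b - a) * ((b - z) / (b - a) * f a + (z - a) / (b - a) * f b) := by field_simp
    _ ≤ (b - a) * f z := mul_le_mul_of_nonneg_left hchord hab.le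

/-- The two-point case of Karamata's inequality. -/
theorem ConcaveOn.mul_add_mul_le_of_mem_Icc {S : Set ℝ} {f : ℝ → ℝ} (hf : ConcaveOn ℝ S f)
    {a b x y p q : ℝ} (ha : a ∈ S) (hb : b ∈ S) (hx : x ∈ Set.Icc a b) (hy : y ∈ Set.Icc a b)
    (hp : 0 ≤ p) (hq : 0 ≤ q) (hsum : p * x + q * y = p * b + q * a) :
    p * f b + q * f a ≤ p * f x + q * f y := by
  rcases (hx.1.trans hx.2).eq_or_lt with rfl | hab
  · obtain rfl : x = a := le_antisymm hx.2 hx.1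
    obtain rfl : y = x := le_antisymm hy.2 hy.1
    rfl
  have hfx := hf.chord_le_of_mem_Icc ha hb hx
  have hfy := hf.chord_le_of_mem_Icc ha hb hy
  refine le_of_mul_le_mul_left ?_ (sub_pos.2 hab)
  linear_combination p * hfx + q * hfy + (f a - f b) * hsum

theorem one_sub_div_sub_one_le {n s : ℝ} (hn : 1 < n) (hs : 1 / n ≤ s) :
    (1 - s) / (n - 1) ≤ s := by
  have hns : 1 ≤ n * s := by rwa [div_le_iff₀ (by linarith), mul_comm] at hs
  rw [div_le_iff₀ (by linarith)]
  linarith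

theorem upper_bound_antitone (N : ℕ) (hN : 2 ≤ N)
    (f : ℝ → ℝ) (hf : ConcaveOn ℝ (Set.Icc (0 : ℝ) 1) f)
    (s t : ℝ) (hs : 1 / (N : ℝ) ≤ s) (hst : s ≤ t) (ht : t ≤ 1) :
    f t + ((N : ℝ) - 1) * f ((1 - t) / ((N : ℝ) - 1)) ≤
      f s + ((N : ℝ) - 1) * f ((1 - s) / ((N : ℝ) - 1)) := by
  have hn : (1 : ℝ) < N := by exact_mod_cast hN
  set a := (1 - t) / ((N : ℝ) - 1)
  set b := (1 - s) / ((N : ℝ) - 1)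
  have ha0 : 0 ≤ a := div_nonneg (by linarith) (by linarith)
  have hab : a ≤ b := div_le_div_of_nonneg_right (by linarith) (by linarith)
  have hbs : b ≤ s := one_sub_div_sub_one_le hn hs
  have hsum : 1 * s + ((N : ℝ) - 1) * b = 1 * t + ((N : ℝ) - 1) * a := by
    simp only [a, b]; field_simp [(sub_pos.2 hn).ne']; ring
  simpa only [one_mul] using hf.mul_add_mul_le_of_mem_Icc
    ⟨ha0, by linarith⟩ ⟨by linarith, ht⟩ ⟨by linarith, hst⟩ ⟨hab, by linarith⟩
    zero_le_one (by linarith) hsum
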